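/- For n = 4, the vector fields X⁴_a = ξ⁽⁴⁾ ∂/∂ξ^a, X³_{ab} = ξ⁽³⁾_a ∂/∂ξ^b + ξ⁽³⁾_b ∂/∂ξ^a, Y⁴_{ab} = ξ⁽⁴⁾ ∂/∂ρ^{ab}, Y³_{abc} = ξ⁽³⁾_a ∂/∂ρ^{bc} + ξ⁽³⁾_b ∂/∂ρ^{ac}, and Y²_{abcd} = ξ⁽²⁾_{ab} ∂/∂ρ^{cd} + (symmetrizations in (ac) and (bd)) all lie in the kernel of the presymplectic form ω = 𝒱_{abc}(ξ) dξ^a ∧ dρ^{bc}: ι_X ω = 0 for each of them. -/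

import Mathlib

open scoped BigOperators

noncomputable def eps {n : ℕ} (g : Fin n → Fin n) : ℝ :=
  ∑ σ : Equiv.Perm (Fin n),
    if (σ : Fin n → Fin n) = g then ((Equiv.Perm.sign σ : ℤ) : ℝ) else 0

section

variable {A : Type*} [Ring A] [Algebra ℝ A]

/-- `ξ⁽⁴⁾ = (1/4!) ε_{abcd} ξ^a ξ^b ξ^c ξ^d`. -/
noncomputable def xiFour (ξ : Fin 4 → A) : A :=
  ((24 : ℝ))⁻¹ • ∑ a, ∑ b, ∑ c, ∑ d,
    eps ![a, b, c, d] • (ξ a * ξ b * ξ c * ξ d)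

/-- `ξ⁽³⁾_e = (1/3!) ε_{e bcd} ξ^b ξ^c ξ^d`. -/
noncomputable def xiThree (ξ : Fin 4 → A) (e : Fin 4) : A :=
  ((6 : ℝ))⁻¹ • ∑ b, ∑ c, ∑ d, eps ![e, b, c, d] • (ξ b * ξ c * ξ d)

/-- `ξ⁽²⁾_{ef} = (1/2!) ε_{ef cd} ξ^c ξ^d`. -/
noncomputable def xiTwo (ξ : Fin 4 → A) (e f : Fin 4) : A :=
  ((2 : ℝ))⁻¹ • ∑ c, ∑ d, eps ![e, f, c, d] • (ξ c * ξ d)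

/-- The contraction `ι_X ω` of `ω = ε_{abcd} ξ^d dξ^a ∧ dρ^{bc}` (n = 4, where
`𝒱_{abc}(ξ) = ε_{abcd} ξ^d`) with a vector field `X` whose components along
`∂/∂ξ^a` are `Cξ a` and along `∂/∂ρ^{bc}` are `Cρ b c`. -/
noncomputable def contrOmega (ξ : Fin 4 → A) (Dξ : Fin 4 → A)
    (Dρ : Fin 4 → Fin 4 → A) (Cξ : Fin 4 → A) (Cρ : Fin 4 → Fin 4 → A) : A :=
  ∑ a, ∑ b, ∑ c, (∑ d, eps ![a, b, c, d] • ξ d) *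
    (Cξ a * Dρ b c + Dξ a * Cρ b c)

/-- The antisymmetrized component of `v ∂/∂ρ^{z w}` along `dρ^{b c}`. -/
noncomputable def dRho (v : A) (z w b c : Fin 4) : A :=
  (if b = z ∧ c = w then v else 0) - (if b = w ∧ c = z then v else 0)

end

/-!
Everything reduces to three multiplication rules for the monomials `ξ⁽ᵏ⁾`:
`ξ^x ξ⁽²⁾_{ef} = δ^x_f ξ⁽³⁾_e - δ^x_e ξ⁽³⁾_f`, `ξ^x ξ⁽³⁾_e = δ^x_e ξ⁽⁴⁾` and `ξ^x ξ⁽⁴⁾ = 0`.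
The first holds because, for `f ≠ e`, every nonzero `ε_{ebcd}` contains `f` exactly once among
`b, c, d`. The other two follow from it by writing `(k+1) ξ⁽ᵏ⁺¹⁾ = ξ^b ξ⁽ᵏ⁾_{…b}` and
anticommuting `ξ^x` past `ξ^b`. Contracting `ω` with each of the fields then produces a
combination of `ξ⁽⁴⁾`'s or `ξ⁽³⁾`'s whose `ε`-coefficients cancel in pairs by antisymmetry.
-/

lemma eps_comp_perm {n : ℕ} (g : Fin n → Fin n) (τ : Equiv.Perm (Fin n)) :
    eps (g ∘ τ) = (Equiv.Perm.sign τ : ℤ) * eps g := by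
  rw [eps, eps, ← Equiv.sum_comp (Equiv.mulRight τ), Finset.mul_sum]
  refine Fintype.sum_congr _ _ fun σ => ?_
  have hcomp : (⇑(σ * τ) = g ∘ τ) ↔ ⇑σ = g := τ.surjective.injective_comp_right.eq_iff
  simp only [Equiv.coe_mulRight, hcomp, Equiv.Perm.sign_mul, mul_ite, mul_zero]
  split_ifs
  · push_cast; ring
  · rfl

lemma eps_comp_swap {n : ℕ} (g : Fin n → Fin n) {i j : Fin n} (hij : i ≠ j) :
    eps (g ∘ Equiv.swap i j) = -eps g := by
  simp [eps_comp_perm, Equiv.Perm.sign_swap hij]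

lemma bijective_of_eps_ne_zero {n : ℕ} {g : Fin n → Fin n} (h : eps g ≠ 0) :
    Function.Bijective g := by
  obtain ⟨σ, -, hσ⟩ := Finset.exists_ne_zero_of_sum_ne_zero h
  have hσg : ⇑σ = g := by by_contra hne; exact hσ (if_neg hne)
  exact hσg ▸ σ.bijective

/-- A nonzero `eps g` forces `g` to take every value exactly once. -/
lemma sum_ite_apply_eq_eps {n : ℕ} (g : Fin n → Fin n) (x : Fin n) :
    (∑ i, if g i = x then eps g else 0) = eps g := by
  by_cases h : eps g = 0
  · simp [h]
  · rw [(bijective_of_eps_ne_zero h).sum_comp fun y => if y = x then eps g else 0]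
    simp

lemma eps_vec_eq_ite (a b c d x : Fin 4) :
    eps ![a, b, c, d] = (if a = x then eps ![a, b, c, d] else 0) +
      (if b = x then eps ![a, b, c, d] else 0) + (if c = x then eps ![a, b, c, d] else 0) +
      (if d = x then eps ![a, b, c, d] else 0) := by
  conv_lhs => rw [← sum_ite_apply_eq_eps _ x, Fin.sum_univ_four]
  rfl

lemma eps_swap01 (a b c d : Fin 4) : eps ![b, a, c, d] = -eps ![a, b, c, d] := by
  rw [← eps_comp_swap ![a, b, c, d] (by decide : (0 : Fin 4) ≠ 1)]
  congr 1; funext i; fin_cases i <;> rfl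

lemma eps_swap03 (a b c d : Fin 4) : eps ![d, b, c, a] = -eps ![a, b, c, d] := by
  rw [← eps_comp_swap ![a, b, c, d] (by decide : (0 : Fin 4) ≠ 3)]
  congr 1; funext i; fin_cases i <;> rfl

lemma eps_swap12 (a b c d : Fin 4) : eps ![a, c, b, d] = -eps ![a, b, c, d] := by
  rw [← eps_comp_swap ![a, b, c, d] (by decide : (1 : Fin 4) ≠ 2)]
  congr 1; funext i; fin_cases i <;> rfl

lemma eps_swap13 (a b c d : Fin 4) : eps ![a, d, c, b] = -eps ![a, b, c, d] := by
  rw [← eps_comp_swap ![a, b, c, d] (by decide : (1 : Fin 4) ≠ 3)]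
  congr 1; funext i; fin_cases i <;> rfl

lemma eps_swap23 (a b c d : Fin 4) : eps ![a, b, d, c] = -eps ![a, b, c, d] := by
  rw [← eps_comp_swap ![a, b, c, d] (by decide : (2 : Fin 4) ≠ 3)]
  congr 1; funext i; fin_cases i <;> rfl

lemma mul_mul_anticomm {R : Type*} [Ring R] {x y : R} (h : x * y = -(y * x)) (z : R) :
    x * (y * z) = -(y * (x * z)) := by
  rw [← mul_assoc, h, neg_mul, mul_assoc]

section Anticommuting

variable {A : Type*} [Ring A] [Algebra ℝ A] {ξ : Fin 4 → A}

lemma xi_mul_self (hξ : ∀ a b, ξ a * ξ b = -(ξ b * ξ a)) (a : Fin 4) : ξ a * ξ a = 0 :=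
  have := IsAddTorsionFree.of_isTorsionFree ℝ A
  self_eq_neg.mp (hξ a a)

lemma xiTwo_swap (e f : Fin 4) : xiTwo ξ f e = -xiTwo ξ e f := by
  simp only [xiTwo, eps_swap01 e f, neg_smul, Finset.sum_neg_distrib, smul_neg]

lemma xiTwo_self (e : Fin 4) : xiTwo ξ e e = 0 :=
  have := IsAddTorsionFree.of_isTorsionFree ℝ A
  self_eq_neg.mp (xiTwo_swap e e)

lemma xiThree_eq_xi_mul_xiTwo (hξ : ∀ a b, ξ a * ξ b = -(ξ b * ξ a)) {e f : Fin 4}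
    (hef : e ≠ f) : xiThree ξ e = ξ f * xiTwo ξ e f := by
  set T : Fin 4 → Fin 4 → Fin 4 → A := fun b c d => eps ![e, b, c, d] • (ξ b * ξ c * ξ d)
  have hsplit : ∀ b c d, T b c d =
      (if b = f then T b c d else 0) + (if c = f then T b c d else 0) +
        (if d = f then T b c d else 0) := by
    intro b c d
    have hcount := eps_vec_eq_ite e b c d f
    rw [if_neg hef, zero_add] at hcount
    simp only [T]
    conv_lhs => rw [hcount]
    simp only [add_smul, ite_smul, zero_smul]
  have hmid : ∀ c d, T c f d = T f c d := by
    intro c d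
    simp only [T, eps_swap12 e f c, hξ c f, neg_mul, smul_neg, neg_smul, neg_neg]
  have hlast : ∀ c d, T c d f = T f c d := by
    intro c d
    simp only [T, eps_swap23 e c f, eps_swap12 e f c, neg_neg, mul_assoc, hξ d f,
      mul_neg, mul_mul_anticomm (hξ c f), neg_neg]
  have hsum : ∑ b, ∑ c, ∑ d, T b c d = (3 : ℝ) • ∑ c, ∑ d, T f c d := by
    conv_lhs => enter [2, b, 2, c, 2, d]; rw [hsplit]
    simp only [Finset.sum_add_distrib, Finset.sum_ite_irrel, Finset.sum_const_zero,
      Finset.sum_ite_eq', Finset.mem_univ, if_true, hmid, hlast]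
    module
  rw [xiThree, hsum, xiTwo, mul_smul_comm, smul_smul]
  simp only [Finset.mul_sum, mul_smul_comm, T, mul_assoc]
  norm_num

lemma xi_mul_xiTwo_of_ne (hξ : ∀ a b, ξ a * ξ b = -(ξ b * ξ a)) {x e f : Fin 4}
    (hxe : x ≠ e) (hxf : x ≠ f) : ξ x * xiTwo ξ e f = 0 := by
  simp only [xiTwo, mul_smul_comm, Finset.mul_sum]
  refine smul_eq_zero_of_right _ (Finset.sum_eq_zero fun c _ => Finset.sum_eq_zero fun d _ => ?_)
  have hcount := eps_vec_eq_ite e f c d x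
  rw [if_neg hxe.symm, if_neg hxf.symm, zero_add, zero_add] at hcount
  have hxx : ξ x * (ξ x * ξ d) = 0 := by rw [← mul_assoc, xi_mul_self hξ, zero_mul]
  have hxcx : ξ x * (ξ c * ξ x) = 0 := by
    rw [mul_mul_anticomm (hξ x c), xi_mul_self hξ, mul_zero, neg_zero]
  rw [hcount, add_smul, ite_smul, ite_smul]
  split_ifs <;> subst_vars <;> simp [hxx, hxcx]

lemma xi_mul_xiTwo (hξ : ∀ a b, ξ a * ξ b = -(ξ b * ξ a)) (x e f : Fin 4) :
    ξ x * xiTwo ξ e f =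
      (if x = f then xiThree ξ e else 0) - (if x = e then xiThree ξ f else 0) := by
  rcases eq_or_ne e f with rfl | hef
  · simp [xiTwo_self]
  by_cases hxf : x = f
  · subst hxf
    rw [if_pos rfl, if_neg hef.symm, sub_zero, xiThree_eq_xi_mul_xiTwo hξ hef]
  by_cases hxe : x = e
  · subst hxe
    rw [if_neg hxf, if_pos rfl, zero_sub, xiTwo_swap f x, mul_neg,
      xiThree_eq_xi_mul_xiTwo hξ hef.symm]
  rw [if_neg hxf, if_neg hxe, sub_zero, xi_mul_xiTwo_of_ne hξ hxe hxf]

lemma smul_xiThree_eq_sum (e : Fin 4) : (3 : ℝ) • xiThree ξ e = ∑ b, ξ b * xiTwo ξ e b := by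
  simp only [xiThree, xiTwo, mul_smul_comm, Finset.mul_sum, ← mul_assoc, ← Finset.smul_sum,
    smul_smul]
  norm_num

lemma smul_xiFour_eq_sum : (4 : ℝ) • xiFour ξ = ∑ a, ξ a * xiThree ξ a := by
  simp only [xiFour, xiThree, mul_smul_comm, Finset.mul_sum, ← mul_assoc, ← Finset.smul_sum,
    smul_smul]
  norm_num

lemma xi_mul_xiThree (hξ : ∀ a b, ξ a * ξ b = -(ξ b * ξ a)) (x e : Fin 4) :
    ξ x * xiThree ξ e = if x = e then xiFour ξ else 0 := by
  have h3 : (3 : ℝ) • (ξ x * xiThree ξ e) =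
      -(ξ x * xiThree ξ e) + if x = e then (4 : ℝ) • xiFour ξ else 0 := by
    rw [← mul_smul_comm, smul_xiThree_eq_sum, Finset.mul_sum,
      Finset.sum_congr rfl fun b _ => by rw [mul_mul_anticomm (hξ x b), xi_mul_xiTwo hξ x e b]]
    simp only [mul_sub, mul_ite, mul_zero, Finset.sum_sub_distrib, Finset.sum_ite_eq,
      Finset.mem_univ, if_true, neg_sub, Finset.sum_ite_irrel, Finset.sum_const_zero,
      smul_xiFour_eq_sum]
    abel
  refine smul_right_injective A (by norm_num : (4 : ℝ) ≠ 0) ?_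
  calc (4 : ℝ) • (ξ x * xiThree ξ e) = (3 : ℝ) • (ξ x * xiThree ξ e) + ξ x * xiThree ξ e := by
        module
    _ = (4 : ℝ) • if x = e then xiFour ξ else 0 := by
        rw [h3, smul_ite, smul_zero]; abel

lemma xi_mul_xiFour (hξ : ∀ a b, ξ a * ξ b = -(ξ b * ξ a)) (x : Fin 4) : ξ x * xiFour ξ = 0 := by
  have h4 : (4 : ℝ) • (ξ x * xiFour ξ) = -(ξ x * xiFour ξ) := by
    rw [← mul_smul_comm, smul_xiFour_eq_sum, Finset.mul_sum,
      Finset.sum_congr rfl fun a _ => by rw [mul_mul_anticomm (hξ x a), xi_mul_xiThree hξ x a]]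
    simp
  have h5 : (5 : ℝ) • (ξ x * xiFour ξ) = 0 := by
    rw [show (5 : ℝ) = 4 + 1 by norm_num, add_smul, h4, one_smul, neg_add_cancel]
  simpa using h5

end Anticommuting

section Contraction

variable {A : Type*} [Ring A] [Algebra ℝ A] {ξ : Fin 4 → A}

/-- The components `𝒱_{abc}(ξ) = ε_{abcd} ξ^d` of `ω`. -/
noncomputable def vol (ξ : Fin 4 → A) (a b c : Fin 4) : A := ∑ d, eps ![a, b, c, d] • ξ d

lemma vol_swap (a b c : Fin 4) : vol ξ a c b = -vol ξ a b c := by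
  simp only [vol, eps_swap12 a b c, neg_smul, Finset.sum_neg_distrib]

lemma vol_mul_xiFour (hξ : ∀ a b, ξ a * ξ b = -(ξ b * ξ a)) (a b c : Fin 4) :
    vol ξ a b c * xiFour ξ = 0 := by
  simp [vol, Finset.sum_mul, xi_mul_xiFour hξ]

lemma vol_mul_xiThree (hξ : ∀ a b, ξ a * ξ b = -(ξ b * ξ a)) (a b c e : Fin 4) :
    vol ξ a b c * xiThree ξ e = eps ![a, b, c, e] • xiFour ξ := by
  simp [vol, Finset.sum_mul, xi_mul_xiThree hξ]

lemma vol_mul_xiTwo (hξ : ∀ a b, ξ a * ξ b = -(ξ b * ξ a)) (a b c e f : Fin 4) :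
    vol ξ a b c * xiTwo ξ e f =
      eps ![a, b, c, f] • xiThree ξ e - eps ![a, b, c, e] • xiThree ξ f := by
  simp [vol, Finset.sum_mul, xi_mul_xiTwo hξ, smul_sub, Finset.sum_sub_distrib]

lemma contrOmega_zero_right (Dξ : Fin 4 → A) (Dρ : Fin 4 → Fin 4 → A) (Cξ : Fin 4 → A) :
    contrOmega ξ Dξ Dρ Cξ 0 = ∑ b, ∑ c, (∑ a, vol ξ a b c * Cξ a) * Dρ b c := by
  simp only [contrOmega, vol, Pi.zero_apply, mul_zero, add_zero, Finset.sum_mul, mul_assoc]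
  rw [Finset.sum_comm]
  exact Finset.sum_congr rfl fun b _ => Finset.sum_comm

lemma contrOmega_zero_left {Dξ : Fin 4 → A} (hDξ : ∀ a x, Dξ a * x = x * Dξ a)
    (Dρ Cρ : Fin 4 → Fin 4 → A) :
    contrOmega ξ Dξ Dρ 0 Cρ = ∑ a, Dξ a * ∑ b, ∑ c, vol ξ a b c * Cρ b c := by
  simp only [contrOmega, vol, Pi.zero_apply, zero_mul, zero_add, Finset.mul_sum]
  refine Finset.sum_congr rfl fun a _ => Finset.sum_congr rfl fun b _ =>
    Finset.sum_congr rfl fun c _ => ?_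
  rw [← mul_assoc, ← hDξ, mul_assoc]

lemma sum_vol_mul_dRho (a : Fin 4) (y : A) (z w : Fin 4) :
    ∑ b, ∑ c, vol ξ a b c * dRho y z w b c = (2 : ℝ) • (vol ξ a z w * y) := by
  simp [dRho, mul_sub, mul_ite, Finset.sum_sub_distrib, ite_and, vol_swap a z w, two_smul]

end Contraction

section KernelVectorFields

variable {A : Type*} [Ring A] [Algebra ℝ A] {ξ : Fin 4 → A} {Dξ : Fin 4 → A}
  {Dρ : Fin 4 → Fin 4 → A}

lemma contrOmega_X4 (hξ : ∀ a b, ξ a * ξ b = -(ξ b * ξ a)) (e : Fin 4) :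
    contrOmega ξ Dξ Dρ (fun b => if b = e then xiFour ξ else 0) 0 = 0 := by
  simp [contrOmega_zero_right, mul_ite, vol_mul_xiFour hξ]

lemma contrOmega_X3 (hξ : ∀ a b, ξ a * ξ b = -(ξ b * ξ a)) (e f : Fin 4) :
    contrOmega ξ Dξ Dρ
      (fun b => (if b = f then xiThree ξ e else 0) + (if b = e then xiThree ξ f else 0)) 0
      = 0 := by
  rw [contrOmega_zero_right]
  refine Finset.sum_eq_zero fun b _ => Finset.sum_eq_zero fun c _ => ?_
  simp [mul_add, mul_ite, Finset.sum_add_distrib, vol_mul_xiThree hξ, eps_swap03 e b c f]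

lemma contrOmega_Y4 (hξ : ∀ a b, ξ a * ξ b = -(ξ b * ξ a))
    (hDξ : ∀ a x, Dξ a * x = x * Dξ a) (e f : Fin 4) :
    contrOmega ξ Dξ Dρ 0 (fun b c => dRho (xiFour ξ) e f b c) = 0 := by
  simp [contrOmega_zero_left hDξ, sum_vol_mul_dRho, vol_mul_xiFour hξ]

lemma contrOmega_Y3 (hξ : ∀ a b, ξ a * ξ b = -(ξ b * ξ a))
    (hDξ : ∀ a x, Dξ a * x = x * Dξ a) (e f g : Fin 4) :
    contrOmega ξ Dξ Dρ 0
      (fun b c => dRho (xiThree ξ e) f g b c + dRho (xiThree ξ f) e g b c) = 0 := by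
  rw [contrOmega_zero_left hDξ]
  refine Finset.sum_eq_zero fun a _ => ?_
  simp [mul_add, Finset.sum_add_distrib, sum_vol_mul_dRho, vol_mul_xiThree hξ,
    eps_swap13 a f g e]

lemma contrOmega_Y2 (hξ : ∀ a b, ξ a * ξ b = -(ξ b * ξ a))
    (hDξ : ∀ a x, Dξ a * x = x * Dξ a) (e f g h : Fin 4) :
    contrOmega ξ Dξ Dρ 0
      (fun b c => dRho (xiTwo ξ e f) g h b c + dRho (xiTwo ξ g f) e h b c
        + dRho (xiTwo ξ e h) g f b c + dRho (xiTwo ξ g h) e f b c) = 0 := by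
  rw [contrOmega_zero_left hDξ]
  refine Finset.sum_eq_zero fun a _ => ?_
  simp only [mul_add, Finset.sum_add_distrib, sum_vol_mul_dRho, vol_mul_xiTwo hξ,
    eps_swap23 a g h f, eps_swap13 a g h e, eps_swap23 a e h f, eps_swap13 a g f e]
  rw [← mul_add, ← mul_add, ← mul_add]
  convert mul_zero (Dξ a) using 2
  module

end KernelVectorFields

theorem kernel_vector_fields_n4_general
    (A : Type*) [Ring A] [Algebra ℝ A]
    (ξ : Fin 4 → A)
    (Dξ : Fin 4 → A) (Dρ : Fin 4 → Fin 4 → A)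
    (hξξ : ∀ a b, ξ a * ξ b = - (ξ b * ξ a))
    (hDξc : ∀ a x, Dξ a * x = x * Dξ a) :
    -- X⁴_e
    (∀ e, contrOmega ξ Dξ Dρ
        (fun b => if b = e then xiFour ξ else 0) 0 = 0) ∧
    -- X³_{ef}
    (∀ e f, contrOmega ξ Dξ Dρ
        (fun b => (if b = f then xiThree ξ e else 0)
          + (if b = e then xiThree ξ f else 0)) 0 = 0) ∧
    -- Y⁴_{ef}
    (∀ e f, contrOmega ξ Dξ Dρ 0
        (fun b c => dRho (xiFour ξ) e f b c) = 0) ∧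
    -- Y³_{efg}
    (∀ e f g, contrOmega ξ Dξ Dρ 0
        (fun b c => dRho (xiThree ξ e) f g b c
          + dRho (xiThree ξ f) e g b c) = 0) ∧
    -- Y²_{efgh}
    (∀ e f g h, contrOmega ξ Dξ Dρ 0
        (fun b c => dRho (xiTwo ξ e f) g h b c
          + dRho (xiTwo ξ g f) e h b c
          + dRho (xiTwo ξ e h) g f b c
          + dRho (xiTwo ξ g h) e f b c) = 0) :=
  ⟨contrOmega_X4 hξξ, contrOmega_X3 hξξ, contrOmega_Y4 hξξ hDξc, contrOmega_Y3 hξξ hDξc,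
    contrOmega_Y2 hξξ hDξc⟩

/-- for `n = 4`, the vector fields
`X⁴_a = ξ⁽⁴⁾ ∂/∂ξ^a`, `X³_{ab} = ξ⁽³⁾_a ∂/∂ξ^b + ξ⁽³⁾_b ∂/∂ξ^a`,
`Y⁴_{ab} = ξ⁽⁴⁾ ∂/∂ρ^{ab}`, `Y³_{abc} = ξ⁽³⁾_a ∂/∂ρ^{bc} + ξ⁽³⁾_b ∂/∂ρ^{ac}`,
`Y²_{abcd} = ξ⁽²⁾_{ab} ∂/∂ρ^{cd} + (symmetrizations in (ac) and (bd))`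
all lie in the kernel of `ω = 𝒱_{abc}(ξ) dξ^a ∧ dρ^{bc} = ε_{abcd} ξ^d dξ^a ∧ dρ^{bc}`:
`ι_X ω = 0` for each of them. -/
theorem kernel_vector_fields_n4
    (A : Type*) [Ring A] [Algebra ℝ A]
    (ξ : Fin 4 → A) (ρ : Fin 4 → Fin 4 → A)
    (Dξ : Fin 4 → A) (Dρ : Fin 4 → Fin 4 → A)
    (hρa : ∀ a b, ρ a b = - ρ b a)
    (hDρa : ∀ a b, Dρ a b = - Dρ b a)
    (hξξ : ∀ a b, ξ a * ξ b = - (ξ b * ξ a))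
    (hξρ : ∀ a b c, ξ a * ρ b c = - (ρ b c * ξ a))
    (hρρ : ∀ a b c d, ρ a b * ρ c d = - (ρ c d * ρ a b))
    (hDξc : ∀ a x, Dξ a * x = x * Dξ a)
    (hDρc : ∀ a b x, Dρ a b * x = x * Dρ a b) :
    -- X⁴_e
    (∀ e, contrOmega ξ Dξ Dρ
        (fun b => if b = e then xiFour ξ else 0) 0 = 0) ∧
    -- X³_{ef}
    (∀ e f, contrOmega ξ Dξ Dρ
        (fun b => (if b = f then xiThree ξ e else 0)
          + (if b = e then xiThree ξ f else 0)) 0 = 0) ∧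
    -- Y⁴_{ef}
    (∀ e f, contrOmega ξ Dξ Dρ 0
        (fun b c => dRho (xiFour ξ) e f b c) = 0) ∧
    -- Y³_{efg}
    (∀ e f g, contrOmega ξ Dξ Dρ 0
        (fun b c => dRho (xiThree ξ e) f g b c
          + dRho (xiThree ξ f) e g b c) = 0) ∧
    -- Y²_{efgh}
    (∀ e f g h, contrOmega ξ Dξ Dρ 0
        (fun b c => dRho (xiTwo ξ e f) g h b c
          + dRho (xiTwo ξ g f) e h b c
          + dRho (xiTwo ξ e h) g f b c
          + dRho (xiTwo ξ g h) e f b c) = 0) :=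
  kernel_vector_fields_n4_general A ξ Dξ Dρ hξξ hDξc
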